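/- Let φ : ℝ⁴∖{0} → ℝ⁴, φ(x) = x/|x|², and λ²(x) = 1/|x|⁴. Then for all x ≠ 0: (a) Δ(λ²)(x) = 8/|x|⁶; (b) |Δφ(x)|² = 16/|x|⁶; (c) the vector field T(x) = Σ_α Δφ^α(x)·∇φ^α(x) equals 4x/|x|⁶; and (d) div T(x) = −8/|x|⁶. -/

import Mathlib

noncomputable section

abbrev E (n : ℕ) := EuclideanSpace ℝ (Fin n)

/-- Partial derivative in the `i`-th coordinate direction. -/
def pd {m : ℕ} (u : E m → ℝ) (i : Fin m) : E m → ℝ :=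
  fun x => fderiv ℝ u x (EuclideanSpace.single i 1)

/-- Euclidean Laplacian `Δu = Σᵢ ∂²u/∂xᵢ²`. -/
def lap {m : ℕ} (u : E m → ℝ) : E m → ℝ :=
  fun x => ∑ i, pd (pd u i) i x

/-- Euclidean divergence of a vector field. -/
def div' {m : ℕ} (V : E m → E m) : E m → ℝ :=
  fun x => ∑ i, pd (fun y => V y i) i x

/-!
Write `r = ‖x‖²` and work in `ℝᵐ`. For radial powers, `∂ᵢ rᵖ = 2p xᵢ rᵖ⁻¹` and
`div (c rᵖ x) = c (m + 2p) rᵖ`, so `Δ rᵖ = div ∇rᵖ = 2p (m + 2p - 2) rᵖ⁻¹`. The Leibniz rule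
`Δ(x_j u) = x_j Δu + 2 ∂_j u` then gives `Δφ^α = -2 (m - 2) x_α r⁻²` for `φ^α = x_α r⁻¹`.
Contracting with `∇φ^α = e_α r⁻¹ - 2 x_α x r⁻²` and using `Σ x_α² = r` yields the radial field
`T = 2 (m - 2) r⁻³ x`, whose divergence is `2 (m - 2)(m - 6) r⁻³` by the divergence formula again.
For `m = 4` these are the four claimed values.
-/

open Filter Topology

section PartialDerivatives

variable {m : ℕ}

theorem pd_congr {u v : E m → ℝ} {x : E m} (h : u =ᶠ[𝓝 x] v) (i : Fin m) :
    pd u i x = pd v i x := by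
  simp only [pd, h.fderiv_eq]

theorem pd_add {u v : E m → ℝ} {x : E m} (hu : DifferentiableAt ℝ u x)
    (hv : DifferentiableAt ℝ v x) (i : Fin m) :
    pd (fun y => u y + v y) i x = pd u i x + pd v i x := by
  simp [pd, fderiv_fun_add hu hv]

theorem pd_const_mul (c : ℝ) (u : E m → ℝ) (i : Fin m) (x : E m) :
    pd (fun y => c * u y) i x = c * pd u i x := by
  simp [pd, ← smul_eq_mul, ← Pi.smul_def, fderiv_const_smul_field]

theorem pd_coord (i j : Fin m) (x : E m) : pd (fun y => y j) i x = if j = i then 1 else 0 := by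
  have h : (fun y : E m => y j) = EuclideanSpace.proj j := rfl
  rw [pd, h, ContinuousLinearMap.fderiv]
  simp [PiLp.single_apply]

theorem pd_coord_mul {u : E m → ℝ} {x : E m} (hu : DifferentiableAt ℝ u x) (i j : Fin m) :
    pd (fun y => y j * u y) i x = (if j = i then u x else 0) + x j * pd u i x := by
  have hcoord : DifferentiableAt ℝ (fun y : E m => y j) x :=
    (EuclideanSpace.proj j : E m →L[ℝ] ℝ).differentiableAt
  have hpd_coord := pd_coord i j x
  simp only [pd] at hpd_coord ⊢
  rw [fderiv_fun_mul hcoord hu]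
  split_ifs at hpd_coord ⊢ <;> simp [hpd_coord, add_comm]

theorem gradient_apply_eq_pd (u : E m → ℝ) (x : E m) (i : Fin m) :
    gradient u x i = pd u i x := by
  rw [gradient, pd, ← InnerProductSpace.toDual_symm_apply, EuclideanSpace.inner_single_right]
  simp

theorem div'_congr {V W : E m → E m} {x : E m} (h : V =ᶠ[𝓝 x] W) : div' V x = div' W x :=
  Finset.sum_congr rfl fun i _ => pd_congr (h.fun_comp fun v => v i) i

theorem lap_eq_div'_gradient (u : E m → ℝ) : lap u = div' (gradient u) := by
  funext x
  simp only [lap, div', gradient_apply_eq_pd]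

theorem lap_coord_mul {u : E m → ℝ} {x : E m} (hu : ∀ᶠ y in 𝓝 x, DifferentiableAt ℝ u y)
    (hpd : ∀ i, DifferentiableAt ℝ (pd u i) x) (j : Fin m) :
    lap (fun y => y j * u y) x = x j * lap u x + 2 * pd u j x := by
  have hcoord : DifferentiableAt ℝ (fun y : E m => y j) x :=
    (EuclideanSpace.proj j : E m →L[ℝ] ℝ).differentiableAt
  have hsecond : ∀ i, pd (pd (fun y => y j * u y) i) i x
      = (if j = i then pd u i x else 0)
        + ((if j = i then pd u i x else 0) + x j * pd (pd u i) i x) := by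
    intro i
    have hfirst : pd (fun y => y j * u y) i =ᶠ[𝓝 x]
        fun y => (if j = i then u y else 0) + y j * pd u i y :=
      hu.mono fun y hy => pd_coord_mul hy i j
    rw [pd_congr hfirst]
    by_cases hji : j = i
    · subst hji
      simp only [if_true]
      rw [pd_add hu.self_of_nhds (hcoord.fun_mul (hpd j)), pd_coord_mul (hpd j), if_pos rfl]
    · simp only [hji, if_false, zero_add]
      rw [pd_coord_mul (hpd i), if_neg hji, zero_add]
  simp only [lap, hsecond, Finset.sum_add_distrib, Finset.sum_ite_eq, Finset.mem_univ, if_true,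
    ← Finset.mul_sum]
  ring

end PartialDerivatives

section RadialPowers

variable {m : ℕ} {x : E m}

theorem hasFDerivAt_norm_sq_zpow (hx : x ≠ 0) (p : ℤ) :
    HasFDerivAt (fun y : E m => (‖y‖ ^ 2) ^ p)
      ((2 * p * (‖x‖ ^ 2) ^ (p - 1)) • innerSL ℝ x) x := by
  have hr : ‖x‖ ^ 2 ≠ 0 := by positivity
  refine ((hasDerivAt_zpow p _ (Or.inl hr)).comp_hasFDerivAt x
    (hasStrictFDerivAt_norm_sq x).hasFDerivAt).congr_fderiv ?_
  ext v
  simp only [smul_apply, coe_innerSL_apply, nsmul_eq_mul, Nat.cast_ofNat, smul_eq_mul]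
  ring

theorem differentiableAt_norm_sq_zpow (hx : x ≠ 0) (p : ℤ) :
    DifferentiableAt ℝ (fun y : E m => (‖y‖ ^ 2) ^ p) x :=
  (hasFDerivAt_norm_sq_zpow hx p).differentiableAt

theorem pd_norm_sq_zpow (hx : x ≠ 0) (p : ℤ) (i : Fin m) :
    pd (fun y : E m => (‖y‖ ^ 2) ^ p) i x = 2 * p * x i * (‖x‖ ^ 2) ^ (p - 1) := by
  simp only [pd, (hasFDerivAt_norm_sq_zpow hx p).fderiv, smul_apply,
    coe_innerSL_apply, EuclideanSpace.inner_single_right, Real.ringHom_apply, one_mul, smul_eq_mul]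
  ring

theorem div'_smul_norm_sq_zpow (hx : x ≠ 0) (c : ℝ) (p : ℤ) :
    div' (fun y : E m => (c * (‖y‖ ^ 2) ^ p) • y) x = c * (m + 2 * p) * (‖x‖ ^ 2) ^ p := by
  have hr : ‖x‖ ^ 2 ≠ 0 := by positivity
  have hterm : ∀ i, pd (fun y : E m => ((c * (‖y‖ ^ 2) ^ p) • y) i) i x
      = c * ((‖x‖ ^ 2) ^ p + 2 * p * (‖x‖ ^ 2) ^ (p - 1) * x i ^ 2) := by
    intro i
    have hcoord : (fun y : E m => ((c * (‖y‖ ^ 2) ^ p) • y) i)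
        = fun y => c * (y i * (‖y‖ ^ 2) ^ p) := by
      funext y
      simp only [PiLp.smul_apply, smul_eq_mul]
      ring
    rw [hcoord, pd_const_mul, pd_coord_mul (differentiableAt_norm_sq_zpow hx p), pd_norm_sq_zpow hx]
    simp only [if_true]
    ring
  simp only [div', hterm, ← Finset.mul_sum, Finset.sum_add_distrib, Finset.sum_const,
    Finset.card_univ, Fintype.card_fin, nsmul_eq_mul, ← EuclideanSpace.real_norm_sq_eq,
    zpow_sub_one₀ hr]
  field_simp

theorem lap_norm_sq_zpow (hx : x ≠ 0) (p : ℤ) :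
    lap (fun y : E m => (‖y‖ ^ 2) ^ p) x = 2 * p * (m + 2 * p - 2) * (‖x‖ ^ 2) ^ (p - 1) := by
  have hgrad : gradient (fun y : E m => (‖y‖ ^ 2) ^ p) =ᶠ[𝓝 x]
      fun y => (2 * p * (‖y‖ ^ 2) ^ (p - 1)) • y :=
    (eventually_ne_nhds hx).mono fun y hy => by
      ext i
      simp only [gradient_apply_eq_pd, pd_norm_sq_zpow hy, PiLp.smul_apply, smul_eq_mul]
      ring
  rw [lap_eq_div'_gradient, div'_congr hgrad, div'_smul_norm_sq_zpow hx]
  push_cast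
  ring

theorem differentiableAt_pd_norm_sq_zpow (hx : x ≠ 0) (p : ℤ) (i : Fin m) :
    DifferentiableAt ℝ (pd (fun y : E m => (‖y‖ ^ 2) ^ p) i) x := by
  have hpd : pd (fun y : E m => (‖y‖ ^ 2) ^ p) i =ᶠ[𝓝 x]
      fun y => 2 * p * y i * (‖y‖ ^ 2) ^ (p - 1) :=
    (eventually_ne_nhds hx).mono fun y hy => pd_norm_sq_zpow hy p i
  refine DifferentiableAt.congr_of_eventuallyEq ?_ hpd
  exact ((differentiableAt_const _).mul (EuclideanSpace.proj i : E m →L[ℝ] ℝ).differentiableAt).mul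
    (differentiableAt_norm_sq_zpow hx _)

theorem lap_coord_mul_norm_sq_zpow (hx : x ≠ 0) (p : ℤ) (j : Fin m) :
    lap (fun y : E m => y j * (‖y‖ ^ 2) ^ p) x
      = 2 * p * (m + 2 * p) * x j * (‖x‖ ^ 2) ^ (p - 1) := by
  rw [lap_coord_mul ((eventually_ne_nhds hx).mono fun y hy => differentiableAt_norm_sq_zpow hy p)
    (differentiableAt_pd_norm_sq_zpow hx p), lap_norm_sq_zpow hx, pd_norm_sq_zpow hx]
  ring

end RadialPowers

section Inversion

variable {m : ℕ} {x : E m}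

theorem inversion_coord_eq (α : Fin m) :
    (fun y : E m => ((‖y‖ ^ 2)⁻¹ • y) α) = fun y => y α * (‖y‖ ^ 2) ^ (-1 : ℤ) := by
  funext y
  simp [mul_comm]

theorem lap_inversion_coord (hx : x ≠ 0) (α : Fin m) :
    lap (fun y : E m => ((‖y‖ ^ 2)⁻¹ • y) α) x = -2 * (m - 2) * x α * (‖x‖ ^ 2) ^ (-2 : ℤ) := by
  rw [inversion_coord_eq, lap_coord_mul_norm_sq_zpow hx, show (-1 : ℤ) - 1 = -2 by norm_num]
  push_cast
  ring

theorem gradient_inversion_coord_apply (hx : x ≠ 0) (α i : Fin m) :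
    gradient (fun y : E m => ((‖y‖ ^ 2)⁻¹ • y) α) x i
      = (if α = i then (‖x‖ ^ 2) ^ (-1 : ℤ) else 0) - 2 * x α * x i * (‖x‖ ^ 2) ^ (-2 : ℤ) := by
  rw [gradient_apply_eq_pd, inversion_coord_eq, pd_coord_mul (differentiableAt_norm_sq_zpow hx _),
    pd_norm_sq_zpow hx, show (-1 : ℤ) - 1 = -2 by norm_num]
  push_cast
  ring

theorem sum_sq_lap_inversion_coord (hx : x ≠ 0) :
    ∑ α : Fin m, (lap (fun y : E m => ((‖y‖ ^ 2)⁻¹ • y) α) x) ^ 2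
      = 4 * (m - 2) ^ 2 * (‖x‖ ^ 2) ^ (-3 : ℤ) := by
  have hsummand : ∀ α, (lap (fun y : E m => ((‖y‖ ^ 2)⁻¹ • y) α) x) ^ 2
      = 4 * (m - 2) ^ 2 * (‖x‖ ^ 2) ^ (-4 : ℤ) * x α ^ 2 := by
    intro α
    rw [lap_inversion_coord hx]
    simp only [zpow_neg, zpow_ofNat]
    ring
  have hr : ‖x‖ ^ 2 ≠ 0 := by positivity
  rw [Finset.sum_congr rfl fun α _ => hsummand α, ← Finset.mul_sum,
    ← EuclideanSpace.real_norm_sq_eq]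
  simp only [zpow_neg, zpow_ofNat]
  field_simp

theorem sum_lap_smul_gradient_inversion_coord (hx : x ≠ 0) :
    ∑ α : Fin m, lap (fun y : E m => ((‖y‖ ^ 2)⁻¹ • y) α) x
        • gradient (fun y : E m => ((‖y‖ ^ 2)⁻¹ • y) α) x
      = (2 * (m - 2) * (‖x‖ ^ 2) ^ (-3 : ℤ)) • x := by
  have hr : ‖x‖ ^ 2 ≠ 0 := by positivity
  ext i
  have hsummand : ∀ α, (lap (fun y : E m => ((‖y‖ ^ 2)⁻¹ • y) α) x
        • gradient (fun y : E m => ((‖y‖ ^ 2)⁻¹ • y) α) x) i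
      = (if α = i then -2 * (m - 2) * x i * (‖x‖ ^ 2) ^ (-3 : ℤ) else 0)
        + 4 * (m - 2) * x i * (‖x‖ ^ 2) ^ (-4 : ℤ) * x α ^ 2 := by
    intro α
    rw [PiLp.smul_apply, smul_eq_mul, lap_inversion_coord hx, gradient_inversion_coord_apply hx]
    split_ifs with hαi
    · subst hαi
      simp only [zpow_neg, zpow_ofNat]
      field_simp
      ring
    · simp only [zpow_neg, zpow_ofNat]
      ring
  rw [WithLp.ofLp_sum, Finset.sum_apply, Finset.sum_congr rfl fun α _ => hsummand α,
    Finset.sum_add_distrib, Finset.sum_ite_eq', ← Finset.mul_sum, ← EuclideanSpace.real_norm_sq_eq]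
  simp only [Finset.mem_univ, if_true, PiLp.smul_apply, smul_eq_mul, zpow_neg, zpow_ofNat]
  field_simp
  ring

theorem div'_sum_lap_smul_gradient_inversion_coord (hx : x ≠ 0) :
    div' (fun y : E m => ∑ α : Fin m, lap (fun z : E m => ((‖z‖ ^ 2)⁻¹ • z) α) y
        • gradient (fun z : E m => ((‖z‖ ^ 2)⁻¹ • z) α) y) x
      = 2 * (m - 2) * (m - 6) * (‖x‖ ^ 2) ^ (-3 : ℤ) := by
  have hT := (eventually_ne_nhds hx).mono fun y hy => sum_lap_smul_gradient_inversion_coord hy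
  rw [div'_congr hT, div'_smul_norm_sq_zpow hx]
  push_cast
  ring

end Inversion

/-- Basic quantities for the inversion `φ(x) = x/|x|²` on `ℝ⁴∖{0}` with `λ²(x) = 1/|x|⁴`:
(a) `Δ(λ²) = 8/|x|⁶`; (b) `|Δφ|² = 16/|x|⁶`; (c) `T = Σ_α Δφ^α∇φ^α = 4x/|x|⁶`;
(d) `div T = −8/|x|⁶`. -/
theorem inversion_basic_quantities (x : E 4) (hx : x ≠ 0) :
    lap (fun y : E 4 => (‖y‖ ^ 4)⁻¹) x = 8 / ‖x‖ ^ 6 ∧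
    (∑ α : Fin 4, (lap (fun y : E 4 => ((‖y‖ ^ 2)⁻¹ • y) α) x) ^ 2) = 16 / ‖x‖ ^ 6 ∧
    (∀ i : Fin 4,
      (∑ α : Fin 4,
          lap (fun y : E 4 => ((‖y‖ ^ 2)⁻¹ • y) α) x
            • gradient (fun y : E 4 => ((‖y‖ ^ 2)⁻¹ • y) α) x) i
        = 4 * x i / ‖x‖ ^ 6) ∧
    div' (fun y : E 4 =>
        ∑ α : Fin 4,
          lap (fun z : E 4 => ((‖z‖ ^ 2)⁻¹ • z) α) y
            • gradient (fun z : E 4 => ((‖z‖ ^ 2)⁻¹ • z) α) y) x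
      = -8 / ‖x‖ ^ 6 := by
  have hlam : (fun y : E 4 => (‖y‖ ^ 4)⁻¹) = fun y => (‖y‖ ^ 2) ^ (-2 : ℤ) := by
    funext y
    rw [zpow_neg, zpow_ofNat, ← pow_mul]
  have hinv6 : (‖x‖ ^ 2) ^ (-3 : ℤ) = (‖x‖ ^ 6)⁻¹ := by
    rw [zpow_neg, zpow_ofNat, ← pow_mul]
  refine ⟨?_, ?_, fun i => ?_, ?_⟩
  · rw [hlam, lap_norm_sq_zpow hx, show (-2 : ℤ) - 1 = -3 by norm_num, hinv6]
    push_cast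
    ring
  · rw [sum_sq_lap_inversion_coord hx, hinv6]
    push_cast
    ring
  · rw [sum_lap_smul_gradient_inversion_coord hx, PiLp.smul_apply, smul_eq_mul, hinv6]
    push_cast
    ring
  · rw [div'_sum_lap_smul_gradient_inversion_coord hx, hinv6]
    push_cast
    ring

end
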